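/- In the ℓ₁-plane, if two axis-parallel rectangles R₁ = I(t₁,t₁') and R₂ = I(t₂,t₂') spanned by pairs of terminals cross (R₁ is 'vertical', R₂ is 'horizontal', and their interiors intersect), then from a shortest rectilinear path joining t₁,t₁' and one joining t₂,t₂', one can extract shortest rectilinear paths joining t₁ with t₂' and t₁' with t₂. Formally: d(t₁,t₂') + d(t₁',t₂) ≤ d(t₁,t₁') + d(t₂,t₂') when the rectangles cross. -/

import Mathlib

/-!
In each coordinate the crossing condition nests one interval inside the other: the `x`-range of
`R₁` lies in that of `R₂`, and the `y`-range of `R₂` in that of `R₁`. For nested intervals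
`[a, b] ⊆ [c, d]` on a line, pairing the endpoints crosswise never costs more than pairing them
as given, `|a - d| + |b - c| ≤ |a - b| + |c - d|`; adding this inequality for the two coordinates
gives the claim.
-/

section NestedIntervals

variable {α : Type*} [AddCommGroup α] [LinearOrder α] [IsOrderedAddMonoid α]

theorem abs_sub_add_abs_sub_le_of_min_le_of_le_max {a b c d : α}
    (hmin : min c d ≤ min a b) (hmax : max a b ≤ max c d) :
    |a - d| + |b - c| ≤ |a - b| + |c - d| := by
  wlog hab : a ≤ b generalizing a b c d
  · have h := this (a := b) (b := a) (c := d) (d := c) (by rwa [min_comm, min_comm b])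
      (by rwa [max_comm, max_comm d]) (le_of_not_ge hab)
    rwa [add_comm, abs_sub_comm b a, abs_sub_comm d c] at h
  rw [min_eq_left hab] at hmin
  rw [max_eq_right hab] at hmax
  rw [abs_of_nonpos (sub_nonpos.2 hab)]
  rcases le_total c d with hcd | hdc
  · rw [min_eq_left hcd] at hmin
    rw [max_eq_right hcd] at hmax
    rw [abs_of_nonpos (sub_nonpos.2 (hab.trans hmax)),
      abs_of_nonneg (sub_nonneg.2 (hmin.trans hab)), abs_of_nonpos (sub_nonpos.2 hcd)]
    exact le_of_eq (by abel)
  · rw [min_eq_right hdc] at hmin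
    rw [max_eq_left hdc] at hmax
    rw [abs_of_nonneg (sub_nonneg.2 hmin), abs_of_nonpos (sub_nonpos.2 hmax),
      abs_of_nonneg (sub_nonneg.2 hdc)]
    calc a - d + -(b - c) = (a - b) + (c - d) := by abel
      _ ≤ -(a - b) + (c - d) := by gcongr; exact le_neg_self_iff.2 (sub_nonpos.2 hab)

end NestedIntervals

def dL1 (p q : ℝ × ℝ) : ℝ := |p.1 - q.1| + |p.2 - q.2|

theorem crossing_rectangles_ineq_general
    (t₁ t₁' t₂ t₂' : ℝ × ℝ)
    (hx1 : min t₂.1 t₂'.1 ≤ min t₁.1 t₁'.1)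
    (hx2 : max t₁.1 t₁'.1 ≤ max t₂.1 t₂'.1)
    (hy1 : min t₁.2 t₁'.2 ≤ min t₂.2 t₂'.2)
    (hy2 : max t₂.2 t₂'.2 ≤ max t₁.2 t₁'.2) :
    dL1 t₁ t₂' + dL1 t₁' t₂ ≤ dL1 t₁ t₁' + dL1 t₂ t₂' := by
  have hx := abs_sub_add_abs_sub_le_of_min_le_of_le_max hx1 hx2
  have hy := abs_sub_add_abs_sub_le_of_min_le_of_le_max hy1 hy2
  rw [abs_sub_comm t₂.2, abs_sub_comm t₂'.2] at hy
  unfold dL1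
  linarith

/-- If the rectangles `I(t₁,t₁')` (vertical) and `I(t₂,t₂')` (horizontal) cross,
then `d(t₁,t₂') + d(t₁',t₂) ≤ d(t₁,t₁') + d(t₂,t₂')`. -/
theorem crossing_rectangles_ineq
    (t₁ t₁' t₂ t₂' : ℝ × ℝ)
    (hx1 : min t₂.1 t₂'.1 ≤ min t₁.1 t₁'.1)
    (hx2 : max t₁.1 t₁'.1 ≤ max t₂.1 t₂'.1)
    (hy1 : min t₁.2 t₁'.2 ≤ min t₂.2 t₂'.2)
    (hy2 : max t₂.2 t₂'.2 ≤ max t₁.2 t₁'.2)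
    (hintx : min t₁.1 t₁'.1 < max t₁.1 t₁'.1)
    (hinty : min t₂.2 t₂'.2 < max t₂.2 t₂'.2) :
    dL1 t₁ t₂' + dL1 t₁' t₂ ≤ dL1 t₁ t₁' + dL1 t₂ t₂' :=
  crossing_rectangles_ineq_general t₁ t₁' t₂ t₂' hx1 hx2 hy1 hy2
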